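/- Let β ⊆ α be compositions with N = |α|−|β| ≥ 1. Then, as formal power series in the variables x_1, x_2, … with rational coefficients, Σ_{T ∈ SET(α/β)} F_{comp(Des_dI(T))} = Σ_T x^T, where the right-hand sum runs over all fillings T of the cells of the skew diagram α/β with positive integers such that the entries of every column strictly increase from bottom to top and the entries of every row weakly increase from left to right. (The common value is the skew extended Schur function E_{α/β}.) -/

import Mathlib

open scoped Classical

namespace ImmaculateSkew

/-- `part α i` is the `i`-th part (0-indexed) of the composition `α`, or `0` if out of range. -/
def part (α : List ℕ) (i : ℕ) : ℕ := α.getD i 0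

/-- a composition: a list of positive integers -/
def IsComposition (α : List ℕ) : Prop := ∀ x ∈ α, 0 < x

/-- `β ⊆ α` for compositions -/
def SubComp (β α : List ℕ) : Prop :=
  β.length ≤ α.length ∧ ∀ j < β.length, part β j ≤ part α j

/-- cell `(i, j)` (row `i` from the bottom, column `j`, both 0-indexed) lies in the diagram of `α` -/
def InDiagram (α : List ℕ) (c : ℕ × ℕ) : Prop :=
  c.1 < α.length ∧ c.2 < part α c.1

/-- cell lies in the skew diagram `α/β` -/
def InSkew (α β : List ℕ) (c : ℕ × ℕ) : Prop :=
  InDiagram α c ∧ ¬ InDiagram β c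

/-- the finite set of cells of the skew diagram `α/β` -/
noncomputable def skewCells (α β : List ℕ) : Finset (ℕ × ℕ) :=
  (Finset.range α.length ×ˢ Finset.range (α.sum + 1)).filter (InSkew α β)

/-- `N = |α| - |β|` -/
def skewSize (α β : List ℕ) : ℕ := α.sum - β.sum

/-- a filling of the cells of `α/β` using each entry of `E` exactly once, zero off the diagram -/
structure IsStdOn (α β : List ℕ) (E : Finset ℕ) (T : ℕ × ℕ → ℕ) : Prop where
  zero_off : ∀ c, ¬ InSkew α β c → T c = 0
  mem : ∀ c, InSkew α β c → T c ∈ E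
  inj : ∀ c c', InSkew α β c → InSkew α β c' → T c = T c' → c = c'
  surj : ∀ v ∈ E, ∃ c, InSkew α β c ∧ T c = v

/-- row entries strictly increase left to right -/
def RowsStrict (α β : List ℕ) (T : ℕ × ℕ → ℕ) : Prop :=
  ∀ i j j', j < j' → InSkew α β (i, j) → InSkew α β (i, j') → T (i, j) < T (i, j')

/-- row entries weakly increase left to right -/
def RowsWeak (α β : List ℕ) (T : ℕ × ℕ → ℕ) : Prop :=
  ∀ i j j', j < j' → InSkew α β (i, j) → InSkew α β (i, j') → T (i, j) ≤ T (i, j')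

/-- all column entries strictly increase bottom to top -/
def ColsStrict (α β : List ℕ) (T : ℕ × ℕ → ℕ) : Prop :=
  ∀ i i' j, i < i' → InSkew α β (i, j) → InSkew α β (i', j) → T (i, j) < T (i', j)

/-- all column entries weakly increase bottom to top -/
def ColsWeak (α β : List ℕ) (T : ℕ × ℕ → ℕ) : Prop :=
  ∀ i i' j, i < i' → InSkew α β (i, j) → InSkew α β (i', j) → T (i, j) ≤ T (i', j)

/-- the column-1 entries (those in `α/β`) strictly increase bottom to top -/
def FirstColStrict (α β : List ℕ) (T : ℕ × ℕ → ℕ) : Prop :=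
  ∀ i i', i < i' → InSkew α β (i, 0) → InSkew α β (i', 0) → T (i, 0) < T (i', 0)

/-- the column-1 entries (those in `α/β`) weakly increase bottom to top -/
def FirstColWeak (α β : List ℕ) (T : ℕ × ℕ → ℕ) : Prop :=
  ∀ i i', i < i' → InSkew α β (i, 0) → InSkew α β (i', 0) → T (i, 0) ≤ T (i', 0)

/-- standard immaculate tableau of shape `α/β` with entry set `E` -/
def IsSITOn (α β : List ℕ) (E : Finset ℕ) (T : ℕ × ℕ → ℕ) : Prop :=
  IsStdOn α β E T ∧ RowsStrict α β T ∧ FirstColStrict α β T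

/-- standard immaculate tableau of shape `α/β` (entries `1, …, N`) -/
def IsSIT (α β : List ℕ) (T : ℕ × ℕ → ℕ) : Prop :=
  IsSITOn α β (Finset.Icc 1 (skewSize α β)) T

/-- standard extended tableau: all columns increase bottom to top -/
def IsSET (α β : List ℕ) (T : ℕ × ℕ → ℕ) : Prop :=
  IsSIT α β T ∧ ColsStrict α β T

/-- the four descent-set variants -/
inductive Variant | dI | rdI | Astar | Abar

/-- `rowRel a r r'`: the relation required between the row `r` containing `i` and the row `r'`
containing `i+1` for `i` to be an `a`-descent -/
def rowRel : Variant → ℕ → ℕ → Prop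
  | .dI    => fun r r' => r < r'
  | .rdI   => fun r r' => r' ≤ r
  | .Astar => fun r r' => r' < r
  | .Abar  => fun r r' => r ≤ r'

/-- the `a`-descent set of a tableau -/
noncomputable def Des (a : Variant) (α β : List ℕ) (T : ℕ × ℕ → ℕ) : Finset ℕ :=
  (Finset.Icc 1 (skewSize α β - 1)).filter fun k =>
    ∃ c c', InSkew α β c ∧ InSkew α β c' ∧ T c = k ∧ T c' = k + 1 ∧ rowRel a c.1 c'.1

/-- interchange the entries `i` and `i+1` -/
def swapEntries (i : ℕ) (T : ℕ × ℕ → ℕ) : ℕ × ℕ → ℕ :=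
  fun c => if T c = i then i + 1 else if T c = i + 1 then i else T c

/-- the 0-Hecke operator `π_i^a` on `SIT(α/β) ∪ {0}` (the zero function plays the role of `0`) -/
noncomputable def piOp (a : Variant) (α β : List ℕ) (i : ℕ) (T : ℕ × ℕ → ℕ) : ℕ × ℕ → ℕ :=
  if i ∈ Des a α β T then
    (if IsSIT α β (swapEntries i T) then swapEntries i T else fun _ => 0)
  else T

/-- the fundamental quasisymmetric function `F_{comp(D)}` for `D ⊆ {1,…,N-1}`, as a power
series in the variables `x_1, x_2, …` (variable `x_n` is `X n`; `x_0` is unused) -/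
noncomputable def Fund (N : ℕ) (D : Finset ℕ) : MvPowerSeries ℕ ℚ :=
  fun d => (Nat.card {f : Fin N → ℕ //
    (∀ j, 1 ≤ f j) ∧
    (∀ j k : Fin N, j ≤ k → f j ≤ f k) ∧
    (∀ (j : ℕ) (_ : 1 ≤ j) (h2 : j < N), j ∈ D → f ⟨j - 1, by omega⟩ < f ⟨j, h2⟩) ∧
    (∑ j, Finsupp.single (f j) 1) = d} : ℚ)

/-- the generating function `Σ_T x^T` over all fillings of the given cells with positive
integers satisfying the predicate `P` (and equal to `0` off the given cells) -/
noncomputable def genF (cs : Finset (ℕ × ℕ)) (P : (ℕ × ℕ → ℕ) → Prop) :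
    MvPowerSeries ℕ ℚ :=
  fun d => (Nat.card {T : ℕ × ℕ → ℕ //
    (∀ c, c ∉ cs → T c = 0) ∧ (∀ c ∈ cs, 1 ≤ T c) ∧ P T ∧
    (∑ c ∈ cs, Finsupp.single (T c) 1) = d} : ℚ)

/-- complete homogeneous symmetric function `h_r` -/
noncomputable def hFun (r : ℕ) : MvPowerSeries ℕ ℚ :=
  fun d => (Nat.card {f : Fin r → ℕ //
    (∀ j, 1 ≤ f j) ∧ (∀ j k : Fin r, j ≤ k → f j ≤ f k) ∧
    (∑ j, Finsupp.single (f j) 1) = d} : ℚ)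

/-- elementary symmetric function `e_r` -/
noncomputable def eFun (r : ℕ) : MvPowerSeries ℕ ℚ :=
  fun d => (Nat.card {f : Fin r → ℕ //
    (∀ j, 1 ≤ f j) ∧ (∀ j k : Fin r, j < k → f j < f k) ∧
    (∑ j, Finsupp.single (f j) 1) = d} : ℚ)

/-- send a filling to the corresponding basis vector of the free `ℚ`-vector space on
`SIT(α/β)`, or to the zero vector if it is not a standard immaculate tableau -/
noncomputable def toBasis (α β : List ℕ) (U : ℕ × ℕ → ℕ) :
    ({T : ℕ × ℕ → ℕ // IsSIT α β T} →₀ ℚ) :=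
  if h : IsSIT α β U then Finsupp.single ⟨U, h⟩ 1 else 0

/-- the linear extension of `π_i^a` to the free `ℚ`-vector space on `SIT(α/β)` -/
noncomputable def piLin (a : Variant) (α β : List ℕ) (i : ℕ) :
    ({T : ℕ × ℕ → ℕ // IsSIT α β T} →₀ ℚ) →ₗ[ℚ]
      ({T : ℕ × ℕ → ℕ // IsSIT α β T} →₀ ℚ) :=
  Finsupp.lift _ ℚ _ (fun T => toBasis α β (piOp a α β i T.1))

/-- one step: the tableau `T` is obtained from `S` by applying one operator `π_i^a` -/
def stepRel (a : Variant) (α β : List ℕ) (S T : ℕ × ℕ → ℕ) : Prop :=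
  IsSIT α β T ∧ ∃ i, 1 ≤ i ∧ i ≤ skewSize α β - 1 ∧ piOp a α β i S = T

/-- `T` is obtained from `S` by applying a (possibly empty) sequence of operators `π_i^a`,
all intermediate results being tableaux -/
def reach (a : Variant) (α β : List ℕ) : (ℕ × ℕ → ℕ) → (ℕ × ℕ → ℕ) → Prop :=
  Relation.ReflTransGen (stepRel a α β)

/-- the number of skew cells of `α/β` strictly above row `i` other than column-1 cells -/
noncomputable def aboveCount (α β : List ℕ) (i : ℕ) : ℕ :=
  ∑ i' ∈ Finset.Ico (i + 1) α.length,
    (if i' < β.length then part α i' - part β i' else part α i' - 1)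

/-- the tableau `S^0_{α/β}`: the column-1 cells of `α/β` are filled with `1, …, ℓ(α)-ℓ(β)`
bottom to top, then the remaining cells are filled row by row, top to bottom, left to right,
with consecutive integers -/
noncomputable def S0 (α β : List ℕ) : ℕ × ℕ → ℕ :=
  fun c =>
    if InSkew α β c then
      if c.2 = 0 ∧ β.length ≤ c.1 then c.1 - β.length + 1
      else (α.length - β.length) + aboveCount α β c.1 +
        (if c.1 < β.length then c.2 - part β c.1 + 1 else c.2)
    else 0

/-- the row superstandard tableau `S^{row}_{α/β}`: rows filled left to right with `1, 2, …, N`,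
bottom row first -/
noncomputable def Srow (α β : List ℕ) : ℕ × ℕ → ℕ :=
  fun c =>
    if InSkew α β c then
      (∑ i' ∈ Finset.range c.1, (part α i' - part β i')) + (c.2 - part β c.1 + 1)
    else 0

/-- `c` is read before `c'` in the reading word (rows top to bottom, right to left in a row) -/
def readBefore (c c' : ℕ × ℕ) : Prop :=
  c'.1 < c.1 ∨ (c.1 = c'.1 ∧ c'.2 < c.2)

/-- the number of inversions of the reading word of a tableau of shape `α/β` -/
noncomputable def invNum (α β : List ℕ) (T : ℕ × ℕ → ℕ) : ℕ :=
  ((skewCells α β ×ˢ skewCells α β).filter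
    (fun p => readBefore p.1 p.2 ∧ T p.2 < T p.1)).card

/-- `φ_U(T)`: fill the cells of `β` by `U` and those of `α/β` by `T` with all entries of `T`
shifted up by `m = |β|` -/
noncomputable def phiU (α β : List ℕ) (U T : ℕ × ℕ → ℕ) : ℕ × ℕ → ℕ :=
  fun c => if InDiagram β c then U c else if InSkew α β c then T c + β.sum else 0

/-- restriction `T_{≤ m}` of `T` to entries `≤ m` -/
def restrLe (m : ℕ) (T : ℕ × ℕ → ℕ) : ℕ × ℕ → ℕ :=
  fun c => if T c ≤ m then T c else 0

/-- restriction `T_{> m}` of `T` to entries `> m` -/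
def restrGt (m : ℕ) (T : ℕ × ℕ → ℕ) : ℕ × ℕ → ℕ :=
  fun c => if m < T c then T c else 0

/-- standardisation `std(T_{>m})`: keep the entries `> m` and subtract `m` from each -/
def stdGt (m : ℕ) (T : ℕ × ℕ → ℕ) : ℕ × ℕ → ℕ :=
  fun c => if m < T c then T c - m else 0

/-- `T ∈ X_{α,β}`: `T ∈ SIT(α)` and the entries `> |β|` of `T` occupy exactly the cells
of `α/β` -/
def memX (α β : List ℕ) (T : ℕ × ℕ → ℕ) : Prop :=
  IsSIT α [] T ∧ ∀ c, InDiagram α c → (β.sum < T c ↔ ¬ InDiagram β c)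

/-!
A filling `T` of `α/β` with strictly increasing columns and weakly increasing rows is the same
thing as a pair `(S, f)` with `S ∈ SET(α/β)` and `f` a weakly increasing sequence of positive
integers that increases strictly at every `dI`-descent of `S`, i.e. a monomial of
`F_{comp(Des_dI S)}`: one has `T = f ∘ S`, and `S` is the standardisation of `T`, numbering the
cells by increasing entry and, among equal entries, from the top row down and from left to right
within a row. The descent condition on `f` is exactly what makes `f ∘ S` column-strict: if `S`
had no `dI`-descent between the entries of two cells, the later cell could not lie in a higher
row.
-/

section Cells

lemma part_eq_zero {γ : List ℕ} {i : ℕ} (h : γ.length ≤ i) : part γ i = 0 :=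
  List.getD_eq_default _ _ h

lemma part_le_sum (γ : List ℕ) (i : ℕ) : part γ i ≤ γ.sum := by
  induction γ generalizing i with
  | nil => simp [part]
  | cons a l ih =>
    cases i with
    | zero => simp [part]
    | succ n => have := ih n; simp only [part, List.getD_cons_succ, List.sum_cons] at *; omega

lemma sum_range_part (γ : List ℕ) : ∑ i ∈ Finset.range γ.length, part γ i = γ.sum := by
  induction γ with
  | nil => simp
  | cons a l ih =>
    rw [List.length_cons, Finset.sum_range_succ', List.sum_cons, ← ih]
    simp only [part, List.getD_cons_succ, List.getD_cons_zero]
    omega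

lemma sum_range_part_of_length_le {γ : List ℕ} {n : ℕ} (h : γ.length ≤ n) :
    ∑ i ∈ Finset.range n, part γ i = γ.sum := by
  rw [← sum_range_part, Finset.sum_subset (Finset.range_subset_range.mpr h)]
  intro i _ hi
  exact part_eq_zero (by simpa using hi)

lemma SubComp.part_le {α β : List ℕ} (hsub : SubComp β α) (i : ℕ) : part β i ≤ part α i := by
  by_cases h : i < β.length
  · exact hsub.2 i h
  · rw [part_eq_zero (not_lt.mp h)]; exact Nat.zero_le _

lemma inSkew_iff (α β : List ℕ) (c : ℕ × ℕ) :
    InSkew α β c ↔ c.1 < α.length ∧ part β c.1 ≤ c.2 ∧ c.2 < part α c.1 := by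
  unfold InSkew InDiagram
  by_cases h : c.1 < β.length
  · omega
  · have := part_eq_zero (γ := β) (not_lt.mp h)
    omega

lemma mem_skewCells {α β : List ℕ} {c : ℕ × ℕ} : c ∈ skewCells α β ↔ InSkew α β c := by
  rw [skewCells, Finset.mem_filter, Finset.mem_product, Finset.mem_range, Finset.mem_range]
  refine ⟨And.right, fun h => ⟨⟨h.1.1, ?_⟩, h⟩⟩
  have := part_le_sum α c.1
  have := h.1.2
  omega

lemma skewCells_eq_biUnion (α β : List ℕ) :
    skewCells α β = (Finset.range α.length).biUnion
      (fun i => (Finset.Ico (part β i) (part α i)).map ⟨(i, ·), Prod.mk_right_injective i⟩) := by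
  ext ⟨i, j⟩
  simp only [mem_skewCells, inSkew_iff, Finset.mem_biUnion, Finset.mem_range, Finset.mem_map,
    Finset.mem_Ico, Function.Embedding.coeFn_mk, Prod.mk.injEq]
  constructor
  · rintro ⟨h1, h2, h3⟩; exact ⟨i, h1, j, ⟨h2, h3⟩, rfl, rfl⟩
  · rintro ⟨i', h1, j', ⟨h2, h3⟩, rfl, rfl⟩; exact ⟨h1, h2, h3⟩

lemma card_skewCells {α β : List ℕ} (hsub : SubComp β α) :
    (skewCells α β).card = skewSize α β := by
  rw [skewCells_eq_biUnion, Finset.card_biUnion]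
  · simp only [Finset.card_map, Nat.card_Ico]
    rw [Finset.sum_tsub_distrib _ (fun i _ => hsub.part_le i), sum_range_part,
      sum_range_part_of_length_le hsub.1, skewSize]
  · intro i _ i' _ hne
    simp only [Finset.disjoint_left, Finset.mem_map, Function.Embedding.coeFn_mk]
    rintro _ ⟨j, _, rfl⟩ ⟨j', _, h⟩
    exact hne (Prod.mk.inj h).1.symm

end Cells

section StandardFillings

variable {α β : List ℕ} {S : ℕ × ℕ → ℕ}

lemma IsStdOn.bounds (hS : IsStdOn α β (Finset.Icc 1 (skewSize α β)) S) {c : ℕ × ℕ}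
    (hc : InSkew α β c) : 1 ≤ S c ∧ S c ≤ skewSize α β :=
  Finset.mem_Icc.mp (hS.mem c hc)

lemma IsStdOn.sum_comp {M : Type*} [AddCommMonoid M]
    (hS : IsStdOn α β (Finset.Icc 1 (skewSize α β)) S) (g : ℕ → M) :
    ∑ c ∈ skewCells α β, g (S c) = ∑ k ∈ Finset.Icc 1 (skewSize α β), g k :=
  Finset.sum_nbij S (fun c hc => hS.mem c (mem_skewCells.mp hc))
    (fun c hc c' hc' => hS.inj c c' (mem_skewCells.mp hc) (mem_skewCells.mp hc'))
    (fun k hk => by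
      obtain ⟨c, hc, rfl⟩ := hS.surj k hk
      exact ⟨c, mem_skewCells.mpr hc, rfl⟩)
    (fun _ _ => rfl)

lemma IsStdOn.card_filter_lt (hS : IsStdOn α β (Finset.Icc 1 (skewSize α β)) S) {c : ℕ × ℕ}
    (hc : InSkew α β c) : ((skewCells α β).filter (S · < S c)).card = S c - 1 := by
  rw [← Nat.card_Ico]
  refine Finset.card_nbij S (fun c' hc' => ?_) (fun c₁ hc₁ c₂ hc₂ => ?_) (fun k hk => ?_)
  · obtain ⟨hc', hlt⟩ := Finset.mem_filter.mp hc'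
    exact Finset.mem_Ico.mpr ⟨(hS.bounds (mem_skewCells.mp hc')).1, hlt⟩
  · exact hS.inj c₁ c₂ (mem_skewCells.mp (Finset.mem_filter.mp hc₁).1)
      (mem_skewCells.mp (Finset.mem_filter.mp hc₂).1)
  · have hk := Finset.mem_Ico.mp hk
    have := hS.bounds hc
    obtain ⟨c', hc', rfl⟩ := hS.surj k (Finset.mem_Icc.mpr (by omega))
    exact ⟨c', Finset.mem_filter.mpr ⟨mem_skewCells.mpr hc', hk.2⟩, rfl⟩

lemma IsSIT.col_lt_of_lt (hS : IsSIT α β S) {c c' : ℕ × ℕ} (hc : InSkew α β c)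
    (hc' : InSkew α β c') (hrow : c.1 = c'.1) (hlt : S c < S c') : c.2 < c'.2 := by
  obtain ⟨i, j⟩ := c
  obtain ⟨i', j'⟩ := c'
  dsimp only at hrow ⊢
  subst hrow
  rcases Nat.lt_trichotomy j j' with h | rfl | h
  · exact h
  · exact absurd hlt (lt_irrefl _)
  · exact absurd (hS.2.1 i j' j h hc' hc) (not_lt.mpr hlt.le)

lemma mem_des_dI (hS : IsStdOn α β (Finset.Icc 1 (skewSize α β)) S) {c c' : ℕ × ℕ}
    (hc : InSkew α β c) (hc' : InSkew α β c') (hv : S c' = S c + 1) (hrow : c.1 < c'.1) :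
    S c ∈ Des .dI α β S := by
  have := hS.bounds hc
  have := hS.bounds hc'
  exact Finset.mem_filter.mpr
    ⟨Finset.mem_Icc.mpr (by omega), c, c', hc, hc', rfl, hv, hrow⟩

lemma row_le_of_no_des (hS : IsStdOn α β (Finset.Icc 1 (skewSize α β)) S) {c : ℕ × ℕ}
    (hc : InSkew α β c) {k : ℕ} (hk : S c ≤ k)
    (hnd : ∀ m, S c ≤ m → m < k → m ∉ Des .dI α β S) {c' : ℕ × ℕ} (hc' : InSkew α β c')
    (hv : S c' = k) : c'.1 ≤ c.1 := by
  induction k, hk using Nat.le_induction generalizing c' with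
  | base => rw [hS.inj c' c hc' hc hv]
  | succ k hk ih =>
    have := hS.bounds hc
    have := hS.bounds hc'
    obtain ⟨b, hb, hbv⟩ := hS.surj k (Finset.mem_Icc.mpr (by omega))
    have hrow : c'.1 ≤ b.1 := by
      by_contra hlt
      exact hnd k hk (lt_add_one k) (hbv ▸ mem_des_dI hS hb hc' (by omega) (not_le.mp hlt))
    exact hrow.trans (ih (fun m h1 h2 => hnd m h1 (by omega)) hb hbv)

lemma exists_des_of_row_lt (hS : IsStdOn α β (Finset.Icc 1 (skewSize α β)) S) {c c' : ℕ × ℕ}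
    (hc : InSkew α β c) (hc' : InSkew α β c') (hrow : c.1 < c'.1) (hle : S c ≤ S c') :
    ∃ k, S c ≤ k ∧ k < S c' ∧ k ∈ Des .dI α β S := by
  by_contra! h
  exact absurd (row_le_of_no_des hS hc hle h hc' rfl) (not_le.mpr hrow)

end StandardFillings

section Relabel

def finExtend {N : ℕ} (f : Fin N → ℕ) (k : ℕ) : ℕ :=
  if h : k < N then f ⟨k, h⟩ else 0

lemma finExtend_of_lt {N : ℕ} (f : Fin N → ℕ) {k : ℕ} (h : k < N) : finExtend f k = f ⟨k, h⟩ :=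
  dif_pos h

lemma finExtend_mono {N : ℕ} {f : Fin N → ℕ} (hf : Monotone f) {k k' : ℕ} (h : k ≤ k')
    (h' : k' < N) : finExtend f k ≤ finExtend f k' := by
  rw [finExtend_of_lt f (h.trans_lt h'), finExtend_of_lt f h']
  exact hf (Fin.mk_le_mk.mpr h)

/-- The ascent condition that `F_{comp(D)}` imposes on its monomials `x_{f 0} ⋯ x_{f (N-1)}`. -/
def StrictAtDes {N : ℕ} (D : Finset ℕ) (f : Fin N → ℕ) : Prop :=
  ∀ (j : ℕ) (_ : 1 ≤ j) (h2 : j < N), j ∈ D → f ⟨j - 1, by omega⟩ < f ⟨j, h2⟩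

variable {α β : List ℕ} {S : ℕ × ℕ → ℕ} {f : Fin (skewSize α β) → ℕ}

lemma finExtend_lt_of_mem_des (hf : StrictAtDes (Des .dI α β S) f) {k : ℕ}
    (hk : k ∈ Des .dI α β S) : finExtend f (k - 1) < finExtend f k := by
  have hkI := Finset.mem_Icc.mp (Finset.mem_filter.mp hk).1
  rw [finExtend_of_lt f (by omega), finExtend_of_lt f (by omega)]
  exact hf k hkI.1 (by omega) hk

/-- `f ∘ S` on the cells of `α/β`, with `f` indexed from `0`. -/
noncomputable def relabel (α β : List ℕ) (f : Fin (skewSize α β) → ℕ) (S : ℕ × ℕ → ℕ) :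
    ℕ × ℕ → ℕ :=
  fun c => if InSkew α β c then finExtend f (S c - 1) else 0

lemma relabel_of_inSkew {c : ℕ × ℕ} (hc : InSkew α β c) :
    relabel α β f S c = finExtend f (S c - 1) :=
  if_pos hc

lemma relabel_pos (hS : IsStdOn α β (Finset.Icc 1 (skewSize α β)) S) (hf : ∀ j, 1 ≤ f j)
    {c : ℕ × ℕ} (hc : InSkew α β c) : 1 ≤ relabel α β f S c := by
  have := hS.bounds hc
  rw [relabel_of_inSkew hc, finExtend_of_lt f (by omega)]
  exact hf _

lemma relabel_le_relabel (hS : IsStdOn α β (Finset.Icc 1 (skewSize α β)) S) (hf : Monotone f)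
    {c c' : ℕ × ℕ} (hc : InSkew α β c) (hc' : InSkew α β c') (hle : S c ≤ S c') :
    relabel α β f S c ≤ relabel α β f S c' := by
  have := hS.bounds hc'
  rw [relabel_of_inSkew hc, relabel_of_inSkew hc']
  exact finExtend_mono hf (by omega) (by omega)

lemma relabel_lt_relabel_of_des (hS : IsStdOn α β (Finset.Icc 1 (skewSize α β)) S)
    (hmono : Monotone f) (hdes : StrictAtDes (Des .dI α β S) f) {c c' : ℕ × ℕ}
    (hc : InSkew α β c) (hc' : InSkew α β c') {k : ℕ} (hk : k ∈ Des .dI α β S)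
    (hck : S c ≤ k) (hkc' : k < S c') :
    relabel α β f S c < relabel α β f S c' := by
  have := hS.bounds hc
  have := hS.bounds hc'
  rw [relabel_of_inSkew hc, relabel_of_inSkew hc']
  calc finExtend f (S c - 1)
      ≤ finExtend f (k - 1) := finExtend_mono hmono (by omega) (by omega)
    _ < finExtend f k := finExtend_lt_of_mem_des hdes hk
    _ ≤ finExtend f (S c' - 1) := finExtend_mono hmono (by omega) (by omega)

lemma relabel_colsStrict (hS : IsSET α β S) (hmono : Monotone f)
    (hdes : StrictAtDes (Des .dI α β S) f) : ColsStrict α β (relabel α β f S) := by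
  intro i i' j hii hc hc'
  obtain ⟨k, hk1, hk2, hk⟩ := exists_des_of_row_lt hS.1.1 hc hc' hii (hS.2 i i' j hii hc hc').le
  exact relabel_lt_relabel_of_des hS.1.1 hmono hdes hc hc' hk hk1 hk2

lemma relabel_rowsWeak (hS : IsSIT α β S) (hmono : Monotone f) :
    RowsWeak α β (relabel α β f S) :=
  fun i j j' hjj hc hc' => relabel_le_relabel hS.1 hmono hc hc' (hS.2.1 i j j' hjj hc hc').le

lemma relabel_weight (hS : IsStdOn α β (Finset.Icc 1 (skewSize α β)) S) :
    ∑ c ∈ skewCells α β, Finsupp.single (relabel α β f S c) 1 =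
      ∑ j, Finsupp.single (f j) 1 := by
  rw [Finset.sum_congr rfl fun c hc => by rw [relabel_of_inSkew (mem_skewCells.mp hc)],
    hS.sum_comp (fun k => Finsupp.single (finExtend f (k - 1)) 1),
    ← Finset.Ico_add_one_right_eq_Icc, Finset.sum_Ico_eq_sum_range, Nat.add_sub_cancel,
    ← Fin.sum_univ_eq_sum_range]
  refine Finset.sum_congr rfl fun j _ => ?_
  rw [Nat.add_sub_cancel_left, finExtend_of_lt f j.2]

end Relabel

section Standardize

def stdLt (T : ℕ × ℕ → ℕ) (c c' : ℕ × ℕ) : Prop :=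
  T c < T c' ∨ (T c = T c' ∧ (c'.1 < c.1 ∨ (c.1 = c'.1 ∧ c.2 < c'.2)))

lemma stdLt_trans {T : ℕ × ℕ → ℕ} {a b c : ℕ × ℕ} (h1 : stdLt T a b) (h2 : stdLt T b c) :
    stdLt T a c := by
  unfold stdLt at *; omega

lemma stdLt_irrefl (T : ℕ × ℕ → ℕ) (a : ℕ × ℕ) : ¬ stdLt T a a := by
  unfold stdLt; omega

lemma stdLt_asymm {T : ℕ × ℕ → ℕ} {a b : ℕ × ℕ} (h : stdLt T a b) : ¬ stdLt T b a :=
  fun h' => stdLt_irrefl T a (stdLt_trans h h')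

lemma stdLt_or_stdLt {T : ℕ × ℕ → ℕ} {a b : ℕ × ℕ} (h : a ≠ b) :
    stdLt T a b ∨ stdLt T b a := by
  have : a.1 ≠ b.1 ∨ a.2 ≠ b.2 := by
    by_contra! h'
    exact h (Prod.ext h'.1 h'.2)
  unfold stdLt
  omega

noncomputable def stdRank (C : Finset (ℕ × ℕ)) (T : ℕ × ℕ → ℕ) (c : ℕ × ℕ) : ℕ :=
  (C.filter (stdLt T · c)).card

section StdRank

variable {C : Finset (ℕ × ℕ)} {T : ℕ × ℕ → ℕ} {c c' : ℕ × ℕ}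

lemma stdRank_lt_stdRank (hc : c ∈ C) (h : stdLt T c c') : stdRank C T c < stdRank C T c' := by
  refine Finset.card_lt_card ⟨?_, fun hsub => ?_⟩
  · exact Finset.monotone_filter_right C fun _ _ hx => stdLt_trans hx h
  · exact stdLt_irrefl T c (Finset.mem_filter.mp (hsub (Finset.mem_filter.mpr ⟨hc, h⟩))).2

lemma stdRank_lt_card (hc : c ∈ C) : stdRank C T c < C.card :=
  Finset.card_lt_card (Finset.filter_ssubset.mpr ⟨c, hc, stdLt_irrefl T c⟩)

lemma stdLt_of_stdRank_lt (hc' : c' ∈ C) (h : stdRank C T c < stdRank C T c') : stdLt T c c' := by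
  rcases eq_or_ne c c' with rfl | hne
  · exact absurd h (lt_irrefl _)
  rcases stdLt_or_stdLt (T := T) hne with h1 | h1
  · exact h1
  · exact absurd h (not_lt.mpr (stdRank_lt_stdRank hc' h1).le)

lemma stdRank_injOn : Set.InjOn (stdRank C T) C := by
  intro c hc c' hc' h
  by_contra hne
  rcases stdLt_or_stdLt (T := T) hne with h1 | h1
  · exact (stdRank_lt_stdRank hc h1).ne h
  · exact (stdRank_lt_stdRank hc' h1).ne h.symm

lemma exists_stdRank_eq {k : ℕ} (hk : k < C.card) : ∃ c ∈ C, stdRank C T c = k := by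
  obtain ⟨c, hc, hck⟩ := Finset.surj_on_of_inj_on_of_card_le (t := Finset.range C.card)
    (fun c _ => stdRank C T c) (fun _ hc => Finset.mem_range.mpr (stdRank_lt_card hc))
    (fun _ _ h1 h2 h => stdRank_injOn h1 h2 h) (by rw [Finset.card_range]) k
    (Finset.mem_range.mpr hk)
  exact ⟨c, hc, hck.symm⟩

end StdRank

noncomputable def standardize (α β : List ℕ) (T : ℕ × ℕ → ℕ) : ℕ × ℕ → ℕ :=
  fun c => if InSkew α β c then stdRank (skewCells α β) T c + 1 else 0

/-- The filter is the single cell that `standardize α β T` numbers `j + 1`, so this is the entry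
of `T` in that cell. -/
noncomputable def entrySeq (α β : List ℕ) (T : ℕ × ℕ → ℕ) : Fin (skewSize α β) → ℕ :=
  fun j => ∑ c ∈ (skewCells α β).filter (standardize α β T · = j + 1), T c

variable {α β : List ℕ} {T : ℕ × ℕ → ℕ}

lemma standardize_of_inSkew {c : ℕ × ℕ} (hc : InSkew α β c) :
    standardize α β T c = stdRank (skewCells α β) T c + 1 :=
  if_pos hc

lemma standardize_isStdOn (hsub : SubComp β α) :
    IsStdOn α β (Finset.Icc 1 (skewSize α β)) (standardize α β T) where
  zero_off _ hc := if_neg hc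
  mem c hc := by
    have := stdRank_lt_card (T := T) (mem_skewCells.mpr hc)
    rw [standardize_of_inSkew hc, Finset.mem_Icc, ← card_skewCells hsub]
    omega
  inj c c' hc hc' h := by
    rw [standardize_of_inSkew hc, standardize_of_inSkew hc', add_left_inj] at h
    exact stdRank_injOn (mem_skewCells.mpr hc) (mem_skewCells.mpr hc') h
  surj v hv := by
    rw [Finset.mem_Icc, ← card_skewCells hsub] at hv
    obtain ⟨c, hc, hck⟩ := exists_stdRank_eq (C := skewCells α β) (T := T) (k := v - 1) (by omega)
    exact ⟨c, mem_skewCells.mp hc, by rw [standardize_of_inSkew (mem_skewCells.mp hc)]; omega⟩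

lemma stdLt_of_standardize_lt {c c' : ℕ × ℕ} (hc : InSkew α β c) (hc' : InSkew α β c')
    (h : standardize α β T c < standardize α β T c') : stdLt T c c' := by
  rw [standardize_of_inSkew hc, standardize_of_inSkew hc', add_lt_add_iff_right] at h
  exact stdLt_of_stdRank_lt (mem_skewCells.mpr hc') h

lemma standardize_lt_of_stdLt {c c' : ℕ × ℕ} (hc : InSkew α β c) (hc' : InSkew α β c')
    (h : stdLt T c c') : standardize α β T c < standardize α β T c' := by
  rw [standardize_of_inSkew hc, standardize_of_inSkew hc', add_lt_add_iff_right]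
  exact stdRank_lt_stdRank (mem_skewCells.mpr hc) h

lemma standardize_isSET (hsub : SubComp β α) (hcol : ColsStrict α β T)
    (hrow : RowsWeak α β T) : IsSET α β (standardize α β T) := by
  have hcols : ColsStrict α β (standardize α β T) := fun i i' j hii hc hc' =>
    standardize_lt_of_stdLt hc hc' (Or.inl (hcol i i' j hii hc hc'))
  have hrows : RowsStrict α β (standardize α β T) := fun i j j' hjj hc hc' =>
    standardize_lt_of_stdLt hc hc'
      ((hrow i j j' hjj hc hc').lt_or_eq.imp id fun h => ⟨h, Or.inr ⟨rfl, hjj⟩⟩)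
  exact ⟨⟨standardize_isStdOn hsub, hrows, fun i i' hii => hcols i i' 0 hii⟩, hcols⟩

lemma entrySeq_eq (j : Fin (skewSize α β)) {c : ℕ × ℕ} (hc : InSkew α β c)
    (hj : standardize α β T c = j + 1) : entrySeq α β T j = T c := by
  have hsingle : (skewCells α β).filter (standardize α β T · = j + 1) = {c} := by
    ext c'
    rw [Finset.mem_filter, Finset.mem_singleton]
    refine ⟨fun ⟨hc', h⟩ => ?_, fun h => h ▸ ⟨mem_skewCells.mpr hc, hj⟩⟩
    rw [standardize_of_inSkew (mem_skewCells.mp hc'), standardize_of_inSkew hc] at *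
    exact stdRank_injOn (T := T) hc' (mem_skewCells.mpr hc) (by omega)
  rw [entrySeq, hsingle, Finset.sum_singleton]

lemma exists_entrySeq_eq (hsub : SubComp β α) (j : Fin (skewSize α β)) :
    ∃ c, InSkew α β c ∧ standardize α β T c = j + 1 ∧ entrySeq α β T j = T c := by
  obtain ⟨c, hc, hcj⟩ := (standardize_isStdOn (T := T) hsub).surj (j + 1)
    (Finset.mem_Icc.mpr ⟨by omega, j.2⟩)
  exact ⟨c, hc, hcj, entrySeq_eq j hc hcj⟩

lemma relabel_entrySeq (hsub : SubComp β α) (hT : ∀ c, ¬ InSkew α β c → T c = 0) :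
    relabel α β (entrySeq α β T) (standardize α β T) = T := by
  funext c
  by_cases hc : InSkew α β c
  · have := (standardize_isStdOn (T := T) hsub).bounds hc
    rw [relabel_of_inSkew hc, finExtend_of_lt _ (by omega)]
    exact entrySeq_eq _ hc (by simp only; omega)
  · rw [relabel, if_neg hc, hT c hc]

lemma entrySeq_pos (hsub : SubComp β α) (hT : ∀ c, InSkew α β c → 1 ≤ T c)
    (j : Fin (skewSize α β)) : 1 ≤ entrySeq α β T j := by
  obtain ⟨c, hc, -, heq⟩ := exists_entrySeq_eq (T := T) hsub j
  exact heq ▸ hT c hc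

lemma entrySeq_monotone (hsub : SubComp β α) : Monotone (entrySeq α β T) := by
  intro j k hjk
  obtain ⟨c, hc, hcj, hTc⟩ := exists_entrySeq_eq (T := T) hsub j
  obtain ⟨c', hc', hck, hTc'⟩ := exists_entrySeq_eq (T := T) hsub k
  rcases hjk.lt_or_eq with hlt | rfl
  · have := stdLt_of_standardize_lt hc hc' (by rw [hcj, hck]; exact Nat.succ_lt_succ hlt)
    unfold stdLt at this
    omega
  · exact le_rfl

lemma entrySeq_strictAtDes :
    StrictAtDes (Des .dI α β (standardize α β T)) (entrySeq α β T) := by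
  intro j h1 h2 hdes
  obtain ⟨-, c, c', hc, hc', hv, hv', hrow⟩ := Finset.mem_filter.mp hdes
  rw [entrySeq_eq _ hc (by simp only; omega), entrySeq_eq _ hc' (by simp only; omega)]
  have := stdLt_of_standardize_lt hc hc' (T := T) (by omega)
  have : c.1 < c'.1 := hrow
  unfold stdLt at *
  omega

end Standardize

section RoundTrip

variable {α β : List ℕ} {S : ℕ × ℕ → ℕ} {f : Fin (skewSize α β) → ℕ}

lemma stdLt_relabel (hS : IsSIT α β S) (hmono : Monotone f)
    (hdes : StrictAtDes (Des .dI α β S) f) {c c' : ℕ × ℕ} (hc : InSkew α β c)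
    (hc' : InSkew α β c') (hlt : S c < S c') : stdLt (relabel α β f S) c c' := by
  rcases (relabel_le_relabel hS.1 hmono hc hc' hlt.le).lt_or_eq with h | h
  · exact Or.inl h
  refine Or.inr ⟨h, ?_⟩
  have hnd : ∀ k, S c ≤ k → k < S c' → k ∉ Des .dI α β S := fun k h1 h2 hk =>
    (relabel_lt_relabel_of_des hS.1 hmono hdes hc hc' hk h1 h2).ne h
  rcases (row_le_of_no_des hS.1 hc hlt.le hnd hc' rfl).lt_or_eq with hrow | hrow
  · exact Or.inl hrow
  · exact Or.inr ⟨hrow.symm, hS.col_lt_of_lt hc hc' hrow.symm hlt⟩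

lemma standardize_relabel (hS : IsSIT α β S) (hmono : Monotone f)
    (hdes : StrictAtDes (Des .dI α β S) f) : standardize α β (relabel α β f S) = S := by
  funext c
  by_cases hc : InSkew α β c
  · have hfilter : (skewCells α β).filter (stdLt (relabel α β f S) · c) =
        (skewCells α β).filter (S · < S c) := by
      refine Finset.filter_congr fun c' hc' => ?_
      replace hc' := mem_skewCells.mp hc'
      refine ⟨fun hlt => ?_, stdLt_relabel hS hmono hdes hc' hc⟩
      rcases Nat.lt_trichotomy (S c') (S c) with h | h | h
      · exact h
      · exact absurd hlt (hS.1.inj c' c hc' hc h ▸ stdLt_irrefl _ _)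
      · exact absurd hlt (stdLt_asymm (stdLt_relabel hS hmono hdes hc hc' h))
    have := hS.1.bounds hc
    rw [standardize_of_inSkew hc, stdRank, hfilter, hS.1.card_filter_lt hc]
    omega
  · rw [standardize, if_neg hc, hS.1.zero_off c hc]

lemma entrySeq_relabel (hS : IsSIT α β S) (hmono : Monotone f)
    (hdes : StrictAtDes (Des .dI α β S) f) : entrySeq α β (relabel α β f S) = f := by
  funext j
  obtain ⟨c, hc, hcj⟩ := hS.1.surj (j + 1) (Finset.mem_Icc.mpr ⟨by omega, j.2⟩)
  rw [entrySeq_eq j hc (by rw [standardize_relabel hS hmono hdes]; exact hcj),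
    relabel_of_inSkew hc, hcj, Nat.add_sub_cancel, finExtend_of_lt f j.2]

end RoundTrip

section Counting

abbrev FundSeq (N : ℕ) (D : Finset ℕ) (d : ℕ →₀ ℕ) : Type :=
  {f : Fin N → ℕ // (∀ j, 1 ≤ f j) ∧ Monotone f ∧ StrictAtDes D f ∧
    (∑ j, Finsupp.single (f j) 1) = d}

lemma coeff_Fund (N : ℕ) (D : Finset ℕ) (d : ℕ →₀ ℕ) :
    MvPowerSeries.coeff d (Fund N D) = Nat.card (FundSeq N D d) :=
  rfl

abbrev GenFFilling (cs : Finset (ℕ × ℕ)) (P : (ℕ × ℕ → ℕ) → Prop) (d : ℕ →₀ ℕ) : Type :=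
  {T : ℕ × ℕ → ℕ // (∀ c, c ∉ cs → T c = 0) ∧ (∀ c ∈ cs, 1 ≤ T c) ∧ P T ∧
    (∑ c ∈ cs, Finsupp.single (T c) 1) = d}

lemma coeff_genF (cs : Finset (ℕ × ℕ)) (P : (ℕ × ℕ → ℕ) → Prop) (d : ℕ →₀ ℕ) :
    MvPowerSeries.coeff d (genF cs P) = Nat.card (GenFFilling cs P d) :=
  rfl

lemma mem_support_of_sum_single {ι : Type*} {s : Finset ι} {g : ι → ℕ} {d : ℕ →₀ ℕ}
    (h : ∑ i ∈ s, Finsupp.single (g i) 1 = d) {i : ι} (hi : i ∈ s) : g i ∈ d.support := by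
  rw [Finsupp.mem_support_iff, ← h, Finsupp.finsetSum_apply]
  refine Nat.pos_iff_ne_zero.mp (lt_of_lt_of_le ?_ (Finset.single_le_sum
    (f := fun i' => Finsupp.single (g i') 1 (g i)) (fun _ _ => Nat.zero_le _) hi))
  simp

instance (N : ℕ) (D : Finset ℕ) (d : ℕ →₀ ℕ) : Finite (FundSeq N D d) :=
  Finite.of_injective (fun f j => (⟨f.1 j, mem_support_of_sum_single f.2.2.2.2
      (Finset.mem_univ j)⟩ : d.support))
    fun _ _ h => Subtype.ext (funext fun j => congrArg Subtype.val (congrFun h j))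

instance (cs : Finset (ℕ × ℕ)) (P : (ℕ × ℕ → ℕ) → Prop) (d : ℕ →₀ ℕ) :
    Finite (GenFFilling cs P d) :=
  Finite.of_injective (fun T (c : cs) => (⟨T.1 c, mem_support_of_sum_single T.2.2.2.2 c.2⟩ :
      d.support))
    fun T T' h => Subtype.ext <| funext fun c => by
      by_cases hc : c ∈ cs
      · exact congrArg Subtype.val (congrFun h ⟨c, hc⟩)
      · rw [T.2.1 c hc, T'.2.1 c hc]

instance (α β : List ℕ) : Finite {S : ℕ × ℕ → ℕ // IsSET α β S} :=
  Finite.of_injective (fun S (c : skewCells α β) =>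
      (⟨S.1 c, S.2.1.1.mem c (mem_skewCells.mp c.2)⟩ : Finset.Icc 1 (skewSize α β)))
    fun S S' h => Subtype.ext <| funext fun c => by
      by_cases hc : InSkew α β c
      · exact congrArg Subtype.val (congrFun h ⟨c, mem_skewCells.mpr hc⟩)
      · rw [S.2.1.1.zero_off c hc, S'.2.1.1.zero_off c hc]

noncomputable def setFundSeqEquiv {α β : List ℕ} (hsub : SubComp β α) (d : ℕ →₀ ℕ) :
    (Σ S : {S : ℕ × ℕ → ℕ // IsSET α β S}, FundSeq (skewSize α β) (Des .dI α β S) d) ≃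
      GenFFilling (skewCells α β) (fun T => ColsStrict α β T ∧ RowsWeak α β T) d where
  toFun x := ⟨relabel α β x.2.1 x.1.1, by
    obtain ⟨⟨S, hS⟩, f, hpos, hmono, hdes, hwt⟩ := x
    exact ⟨fun _ hc => if_neg (hc ∘ mem_skewCells.mpr),
      fun _ hc => relabel_pos hS.1.1 hpos (mem_skewCells.mp hc),
      ⟨relabel_colsStrict hS hmono hdes, relabel_rowsWeak hS.1 hmono⟩,
      (relabel_weight hS.1.1).trans hwt⟩⟩
  invFun T := ⟨⟨standardize α β T.1, standardize_isSET hsub T.2.2.2.1.1 T.2.2.2.1.2⟩,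
    entrySeq α β T.1, by
      obtain ⟨T, hzero, hpos, -, hwt⟩ := T
      refine ⟨entrySeq_pos hsub (fun c hc => hpos c (mem_skewCells.mpr hc)),
        entrySeq_monotone hsub, entrySeq_strictAtDes, ?_⟩
      rw [← relabel_weight (standardize_isStdOn hsub),
        relabel_entrySeq hsub fun c hc => hzero c (hc ∘ mem_skewCells.mp), hwt]⟩
  left_inv := fun ⟨⟨_, hS⟩, _, _, hmono, hdes, _⟩ =>
    Sigma.subtype_ext (Subtype.ext (standardize_relabel hS.1 hmono hdes))
      (entrySeq_relabel hS.1 hmono hdes)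
  right_inv := fun ⟨_, hzero, _⟩ =>
    Subtype.ext (relabel_entrySeq hsub fun c hc => hzero c (hc ∘ mem_skewCells.mp))

end Counting

theorem skew_extended_schur_general (α β : List ℕ) (hsub : SubComp β α) :
    (∑ᶠ (T : ℕ × ℕ → ℕ) (_ : IsSET α β T), Fund (skewSize α β) (Des .dI α β T)) =
      genF (skewCells α β) (fun T => ColsStrict α β T ∧ RowsWeak α β T) := by
  have := Fintype.ofFinite {S : ℕ × ℕ → ℕ // IsSET α β S}
  ext d
  rw [← finsum_subtype_eq_finsum_cond, finsum_eq_sum_of_fintype, map_sum, coeff_genF,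
    ← Nat.card_congr (setFundSeqEquiv hsub d), Nat.card_sigma, Nat.cast_sum]
  simp only [coeff_Fund]

/-- the skew extended Schur function `E_{α/β}`:
`Σ_{T ∈ SET(α/β)} F_{comp(Des_dI(T))}` equals the generating function of all fillings of
`α/β` with strictly increasing columns and weakly increasing rows. -/
theorem skew_extended_schur (α β : List ℕ)
    (hα : IsComposition α) (hβ : IsComposition β) (hsub : SubComp β α)
    (hN : 1 ≤ skewSize α β) :
    (∑ᶠ (T : ℕ × ℕ → ℕ) (_ : IsSET α β T), Fund (skewSize α β) (Des .dI α β T)) =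
      genF (skewCells α β) (fun T => ColsStrict α β T ∧ RowsWeak α β T) :=
  skew_extended_schur_general α β hsub

end ImmaculateSkew
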